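/- arXiv:2204.07952 — 2 statements merged into one kernel-verified Lean document; each statement's English description precedes it below -/
import Mathlib

section
/- (Combinatorial counting step in Lemma 5.5) Fix integers N ≥ 2 and m ≥ 1 with 2m ≤ N. Let J^c be the set of tuples (j_1,...,j_{2m}) ∈ {2,...,N}^{2m} such that every value appearing in the tuple appears at least twice. Then the cardinality of J^c is at most 2 (N e)^m e^m m!. -/
/-!
A tuple in which every value occurs at least twice takes at most `m` distinct values, so it is a
map from `Fin (2m)` into some `m`-element subset of `Fin N`; hence there are at most
`C(N, m) m^(2m)` of them. The bound follows from `C(N, m) ≤ N^m / m!` and the Stirling-type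
inequality `m^m ≤ e^m m!`.
-/

open Finset Fintype

theorem two_mul_card_image_le_of_two_le_card_fiber {α β : Type*} [Fintype α] [DecidableEq β]
    {f : α → β} (hf : ∀ a, 2 ≤ #{l | f l = f a}) : 2 * #(univ.image f) ≤ card α := by
  refine mul_card_image_le_card univ 2 fun b hb => ?_
  obtain ⟨a, -, rfl⟩ := mem_image.mp hb
  exact hf a

theorem card_filter_card_image_le_le {α β : Type*} [Fintype α] [DecidableEq α] [Fintype β]
    [DecidableEq β] (m : ℕ) (hm : m ≤ card β) :
    #{f : α → β | #(univ.image f) ≤ m} ≤ (card β).choose m * m ^ card α := by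
  calc #{f : α → β | #(univ.image f) ≤ m}
      ≤ #((powersetCard m univ).biUnion fun S => piFinset fun _ : α => S) := by
        refine card_le_card fun f hf => ?_
        obtain ⟨S, hfS, -, hS⟩ :=
          exists_subsuperset_card_eq (subset_univ _) (mem_filter.mp hf).2 (by simpa using hm)
        exact mem_biUnion.mpr ⟨S, mem_powersetCard.mpr ⟨subset_univ S, hS⟩,
          mem_piFinset.mpr fun a => hfS (mem_image_of_mem f (mem_univ a))⟩
    _ ≤ ∑ S ∈ powersetCard m univ, #(piFinset fun _ : α => S) := card_biUnion_le
    _ = (card β).choose m * m ^ card α := by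
        rw [Finset.sum_congr rfl fun S hS => by
            rw [card_piFinset, prod_const, (mem_powersetCard.mp hS).2, card_univ],
          sum_const, card_powersetCard, card_univ, smul_eq_mul]

theorem pow_le_exp_one_pow_mul_factorial (m : ℕ) :
    (m : ℝ) ^ m ≤ Real.exp 1 ^ m * m.factorial := by
  rw [← div_le_iff₀ (by positivity), Real.exp_one_pow]
  exact Real.pow_div_factorial_le_exp _ m.cast_nonneg m

theorem choose_mul_pow_two_mul_le (N m : ℕ) :
    (N.choose m : ℝ) * (m : ℝ) ^ (2 * m)
      ≤ ((N : ℝ) * Real.exp 1) ^ m * Real.exp 1 ^ m * m.factorial := by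
  have hfac : (0 : ℝ) < m.factorial := by positivity
  have hstirling := pow_le_exp_one_pow_mul_factorial m
  calc (N.choose m : ℝ) * (m : ℝ) ^ (2 * m)
      ≤ (N : ℝ) ^ m / m.factorial * (Real.exp 1 ^ m * m.factorial) ^ 2 := by
        rw [mul_comm 2 m, pow_mul]
        gcongr
        exact Nat.choose_le_pow_div m N
    _ = ((N : ℝ) * Real.exp 1) ^ m * Real.exp 1 ^ m * m.factorial := by
        field_simp
        ring

theorem index_tuple_counting_general (N m : ℕ) (hmN : 2 * m ≤ N) :
    (Nat.card {j : Fin (2 * m) → Fin N //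
        (∀ k, 1 ≤ (j k : ℕ)) ∧
        ∀ k, 2 ≤ Nat.card {l : Fin (2 * m) // j l = j k}} : ℝ)
      ≤ 2 * ((N : ℝ) * Real.exp 1) ^ m * Real.exp 1 ^ m * (Nat.factorial m : ℝ) := by
  have hcount : Nat.card {j : Fin (2 * m) → Fin N //
        (∀ k, 1 ≤ (j k : ℕ)) ∧ ∀ k, 2 ≤ Nat.card {l : Fin (2 * m) // j l = j k}}
      ≤ N.choose m * m ^ (2 * m) := by
    calc _ ≤ #{j : Fin (2 * m) → Fin N | #(univ.image j) ≤ m} := by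
          rw [Nat.card_eq_fintype_card, Fintype.card_subtype]
          refine card_le_card (monotone_filter_right _ fun j _ hj => ?_)
          have := two_mul_card_image_le_of_two_le_card_fiber (f := j) fun k => by
            simpa [Nat.card_eq_fintype_card, Fintype.card_subtype] using hj.2 k
          simp only [Fintype.card_fin] at this
          omega
      _ ≤ N.choose m * m ^ (2 * m) := by
          simpa using card_filter_card_image_le_le (α := Fin (2 * m)) (β := Fin N) m
            (by simp only [Fintype.card_fin]; omega)
  calc _ ≤ (N.choose m : ℝ) * (m : ℝ) ^ (2 * m) := by exact_mod_cast hcount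
    _ ≤ ((N : ℝ) * Real.exp 1) ^ m * Real.exp 1 ^ m * m.factorial :=
        choose_mul_pow_two_mul_le N m
    _ ≤ _ := by
        rw [mul_assoc 2, mul_assoc 2]
        exact le_mul_of_one_le_left (by positivity) one_le_two

/-- Combinatorial counting step in Lemma 5.5: for `2 ≤ N`, `1 ≤ m`, `2m ≤ N`, the number of
tuples `(j_1,…,j_{2m}) ∈ {2,…,N}^{2m}` (encoded as functions `Fin (2m) → Fin N` taking values
of index `≥ 1`) in which every value that appears, appears at least twice, is at most
`2 (Ne)^m e^m m!`. -/
theorem index_tuple_counting (N m : ℕ) (hN : 2 ≤ N) (hm : 1 ≤ m) (hmN : 2 * m ≤ N) :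
    (Nat.card {j : Fin (2 * m) → Fin N //
        (∀ k, 1 ≤ (j k : ℕ)) ∧
        ∀ k, 2 ≤ Nat.card {l : Fin (2 * m) // j l = j k}} : ℝ)
      ≤ 2 * ((N : ℝ) * Real.exp 1) ^ m * Real.exp 1 ^ m * (Nat.factorial m : ℝ) :=
  index_tuple_counting_general N m hmN
end

section
/- (Dimensional bound on entropy) Let E be a measurable space, μ^N a symmetric probability measure on E^N (invariant under permutations of coordinates), and μ a probability measure on E. Then for any 1 ≤ k ≤ N, the relative entropy of the k-fold marginal μ^{N,k} with respect to μ^{⊗k} satisfies H(μ^{N,k} | μ^{⊗k}) ≤ (2k/N) H(μ^N | μ^{⊗N}). -/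
open MeasureTheory
open scoped ENNReal Classical

/-- Relative entropy `H(μ|ν) = ∫ log(dμ/dν) dμ` when `μ ≪ ν` and the log-likelihood ratio is
`μ`-integrable, and `∞` otherwise. -/
noncomputable def relEntropy {E : Type*} [MeasurableSpace E] (μ ν : Measure E) : ℝ≥0∞ :=
  if μ ≪ ν ∧ Integrable (llr μ ν) μ then ENNReal.ofReal (∫ x, llr μ ν x ∂μ) else ∞

/-!
Cut the first `⌊N/k⌋ * k` coordinates into `m = ⌊N/k⌋` disjoint blocks of `k` coordinates.
By symmetry every block has law `μ^{N,k}`, and relative entropy with respect to a product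
measure is superadditive over disjoint blocks: if `f` is the density of `μ^{N,k}`, then
`x ↦ ∏ⱼ f (x restricted to block j)` is a probability density for `μ^{⊗N}`, so Gibbs'
inequality bounds `∑ⱼ H(block j)` by `H(μ^N | μ^{⊗N})`. Hence
`m H(μ^{N,k} | μ^{⊗k}) ≤ H(μ^N | μ^{⊗N})`, and `N ≤ 2 k m`.
-/

open ProbabilityTheory Function

namespace MeasureTheory

section Blocks

variable {X : Type*} [MeasurableSpace X] (μ : Measure X) [IsProbabilityMeasure μ]
  {ι κ α : Type*} [Fintype ι] [Fintype κ] [Fintype α]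

theorem Measure.pi_map_comp_of_injective {e : κ → ι} (he : Injective e) :
    (Measure.pi fun _ : ι => μ).map (fun x => x ∘ e) = Measure.pi fun _ : κ => μ := by
  have hcomp : (fun x : ι → X => x ∘ e) =
      MeasurableEquiv.piCongrLeft (fun _ => X) (Equiv.ofInjective e he).symm ∘
        (Set.range e).domRestrict := by
    ext x k
    simp [MeasurableEquiv.coe_piCongrLeft, Equiv.piCongrLeft_apply_eq_cast, Set.domRestrict]
  rw [hcomp, ← map_map (by fun_prop) (by fun_prop), ← infinitePi_eq_pi,
    infinitePi_map_restrict', ← infinitePi_eq_pi, infinitePi_map_piCongrLeft (fun _ => μ)]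

theorem Measure.pi_map_blocks {e : κ → α → ι} (he : Injective (uncurry e)) :
    (Measure.pi fun _ : ι => μ).map (fun x j => x ∘ e j) =
      Measure.pi fun _ : κ => Measure.pi fun _ : α => μ := by
  have hcomp : (fun (x : ι → X) j => x ∘ e j) =
      MeasurableEquiv.curry κ α X ∘ fun x => x ∘ uncurry e := rfl
  rw [hcomp, ← map_map (by fun_prop) (by fun_prop), Measure.pi_map_comp_of_injective μ he,
    ← infinitePi_eq_pi, infinitePi_map_curry (fun _ _ => μ)]
  simp only [infinitePi_eq_pi]

theorem iIndepFun_blocks_pi {e : κ → α → ι} (he : Injective (uncurry e)) :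
    iIndepFun (fun j (x : ι → X) => x ∘ e j) (Measure.pi fun _ : ι => μ) := by
  rw [iIndepFun_iff_map_fun_eq_pi_map fun j => (by fun_prop : Measurable _).aemeasurable,
    Measure.pi_map_blocks μ he]
  congr with j : 1
  exact (Measure.pi_map_comp_of_injective μ (he.comp (Prod.mk_right_injective j))).symm

theorem lintegral_prod_blocks_pi {e : κ → α → ι} (he : Injective (uncurry e))
    {f : κ → (α → X) → ℝ≥0∞} (hf : ∀ j, Measurable (f j)) :
    ∫⁻ x, ∏ j, f j (x ∘ e j) ∂(Measure.pi fun _ : ι => μ) =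
      ∏ j, ∫⁻ y, f j y ∂(Measure.pi fun _ : α => μ) := by
  have hindep := lintegral_prod_eq_prod_lintegral_of_indepFun Finset.univ _
    ((iIndepFun_blocks_pi μ he).comp f hf) fun j => (hf j).comp (by fun_prop)
  simp only [comp_apply] at hindep
  rw [hindep]
  congr with j : 1
  rw [← Measure.pi_map_comp_of_injective μ (he.comp (Prod.mk_right_injective j)),
    lintegral_map (hf j) (by fun_prop)]
  rfl

end Blocks

theorem Measure.map_comp_eq_of_perm_invariant {X ι α : Type*} [MeasurableSpace X] [Finite α]
    {ρ : Measure (ι → X)} (hρ : ∀ σ : Equiv.Perm ι, ρ.map (fun x => x ∘ σ) = ρ)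
    {u v : α → ι} (hu : Injective u) (hv : Injective v) :
    ρ.map (fun x => x ∘ u) = ρ.map (fun x => x ∘ v) := by
  obtain ⟨σ, hσ⟩ := Equiv.Perm.exists_extending_pair u v hu hv
  have hcomp : (fun x : ι → X => x ∘ v) = (fun x => x ∘ u) ∘ fun x => x ∘ σ := by
    ext x i
    simp [← hσ]
  rw [hcomp, ← Measure.map_map (by fun_prop) (by fun_prop), hρ]

section Gibbs

variable {Ω : Type*} [MeasurableSpace Ω] {ρ ν : Measure Ω}

theorem lintegral_div_rnDeriv_le [ρ.HaveLebesgueDecomposition ν] (hρν : ρ ≪ ν)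
    {φ : Ω → ℝ≥0∞} (hφ : AEMeasurable φ ν) :
    ∫⁻ x, φ x / ρ.rnDeriv ν x ∂ρ ≤ ∫⁻ x, φ x ∂ν := by
  rw [← lintegral_rnDeriv_mul (f := fun x => φ x / ρ.rnDeriv ν x) hρν
    (hφ.div (Measure.measurable_rnDeriv ρ ν).aemeasurable)]
  exact lintegral_mono fun x => ENNReal.mul_div_le

/-- Gibbs' inequality: integrate `t ≤ exp t - 1` at `t = w - llr ρ ν` against `ρ`. -/
theorem integral_le_integral_llr [IsProbabilityMeasure ρ] [ρ.HaveLebesgueDecomposition ν]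
    (hρν : ρ ≪ ν) (hllr : Integrable (llr ρ ν) ρ) {φ : Ω → ℝ≥0∞} (hφ : Measurable φ)
    (hφν : ∫⁻ x, φ x ∂ν ≤ 1) {w : Ω → ℝ} (hw : Integrable w ρ)
    (hwφ : ∀ᵐ x ∂ρ, ENNReal.ofReal (Real.exp (w x)) ≤ φ x) :
    ∫ x, w x ∂ρ ≤ ∫ x, llr ρ ν x ∂ρ := by
  set g := ρ.rnDeriv ν
  have hφg_meas : AEMeasurable (fun x => φ x / g x) ρ :=
    (hφ.div (Measure.measurable_rnDeriv ρ ν)).aemeasurable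
  have hφg_lint : ∫⁻ x, φ x / g x ∂ρ ≤ 1 :=
    (lintegral_div_rnDeriv_le hρν hφ.aemeasurable).trans hφν
  have hφg_ne_top : ∫⁻ x, φ x / g x ∂ρ ≠ ∞ :=
    ne_top_of_le_ne_top ENNReal.one_ne_top hφg_lint
  have hφg_int : Integrable (fun x => (φ x / g x).toReal) ρ :=
    integrable_toReal_of_lintegral_ne_top hφg_meas hφg_ne_top
  have hφg_le : ∫ x, (φ x / g x).toReal ∂ρ ≤ 1 := by
    rw [integral_toReal hφg_meas (ae_lt_top' hφg_meas hφg_ne_top)]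
    exact ENNReal.toReal_le_of_le_ofReal zero_le_one (by simpa using hφg_lint)
  have hφ_lt_top : ∀ᵐ x ∂ν, φ x < ∞ :=
    ae_lt_top hφ (ne_top_of_le_ne_top ENNReal.one_ne_top hφν)
  have hpointwise : ∀ᵐ x ∂ρ, w x - llr ρ ν x ≤ (φ x / g x).toReal - 1 := by
    filter_upwards [Measure.rnDeriv_pos hρν, hρν.ae_le (Measure.rnDeriv_lt_top ρ ν),
      hρν.ae_le hφ_lt_top, hwφ] with x hg_pos hg_lt_top hφ_lt_top hx
    have hg_real : 0 < (g x).toReal := ENNReal.toReal_pos hg_pos.ne' hg_lt_top.ne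
    calc w x - llr ρ ν x ≤ Real.exp (w x - llr ρ ν x) - 1 := by
          linarith [Real.add_one_le_exp (w x - llr ρ ν x)]
      _ = Real.exp (w x) / (g x).toReal - 1 := by
          rw [Real.exp_sub, llr, Real.exp_log hg_real]
      _ ≤ (φ x / g x).toReal - 1 := by
          rw [ENNReal.toReal_div]
          gcongr
          exact (ENNReal.ofReal_le_iff_le_toReal hφ_lt_top.ne).1 hx
  have hmono : ∫ x, w x - llr ρ ν x ∂ρ ≤ ∫ x, (φ x / g x).toReal - 1 ∂ρ :=
    integral_mono_ae (hw.sub hllr) (hφg_int.sub (integrable_const 1)) hpointwise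
  rw [integral_sub hw hllr, integral_sub hφg_int (integrable_const 1), integral_const,
    probReal_univ, one_smul] at hmono
  linarith

end Gibbs

end MeasureTheory

namespace InformationTheory

section ProbabilityMeasures

variable {Ω : Type*} [MeasurableSpace Ω] {ρ ν : Measure Ω} [IsProbabilityMeasure ρ]
  [IsProbabilityMeasure ν]

lemma integral_llr_nonneg (hρν : ρ ≪ ν) (hllr : Integrable (llr ρ ν) ρ) :
    0 ≤ ∫ x, llr ρ ν x ∂ρ := by
  simpa using integral_llr_add_sub_measure_univ_nonneg hρν hllr

lemma klDiv_eq_ofReal_integral_llr (hρν : ρ ≪ ν) (hllr : Integrable (llr ρ ν) ρ) :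
    klDiv ρ ν = ENNReal.ofReal (∫ x, llr ρ ν x ∂ρ) := by
  simp [klDiv_of_ac_of_integrable hρν hllr]

end ProbabilityMeasures

variable {X : Type*} [MeasurableSpace X] (μ : Measure X) [IsProbabilityMeasure μ]
  {ι κ α : Type*} [Fintype ι] [Fintype κ] [Fintype α]

theorem sum_klDiv_map_blocks_le (ρ : Measure (ι → X)) [IsProbabilityMeasure ρ]
    {e : κ → α → ι} (he : Injective (uncurry e)) :
    ∑ j, klDiv (ρ.map fun x => x ∘ e j) (Measure.pi fun _ : α => μ) ≤
      klDiv ρ (Measure.pi fun _ : ι => μ) := by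
  set ν := Measure.pi fun _ : ι => μ
  set νa := Measure.pi fun _ : α => μ
  set ρb : κ → Measure (α → X) := fun j => ρ.map fun x => x ∘ e j
  by_cases hfin : klDiv ρ ν = ∞
  · rw [hfin]; exact le_top
  obtain ⟨hac, hllr⟩ := klDiv_ne_top_iff.1 hfin
  have hmeas : ∀ j, Measurable fun x : ι → X => x ∘ e j := fun j => by fun_prop
  have hprob : ∀ j, IsProbabilityMeasure (ρb j) := fun j =>
    Measure.isProbabilityMeasure_map (hmeas j).aemeasurable
  have hν_map : ∀ j, ν.map (fun x => x ∘ e j) = νa := fun j =>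
    Measure.pi_map_comp_of_injective μ (he.comp (Prod.mk_right_injective j))
  have hac_b : ∀ j, ρb j ≪ νa := fun j => hν_map j ▸ hac.map (hmeas j)
  have hllr_b : ∀ j, Integrable (llr (ρb j) νa) (ρb j) := fun j =>
    hν_map j ▸ integrable_llr_map hac (hmeas j) hllr
  have hllr_comp : ∀ j, Integrable (fun x => llr (ρb j) νa (x ∘ e j)) ρ := fun j =>
    (integrable_map_measure (hllr_b j).1 (hmeas j).aemeasurable).1 (hllr_b j)
  have hexp : ∀ᵐ x ∂ρ, ENNReal.ofReal (Real.exp (∑ j, llr (ρb j) νa (x ∘ e j))) ≤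
      ∏ j, (ρb j).rnDeriv νa (x ∘ e j) := by
    have hexp_b : ∀ᵐ x ∂ρ, ∀ j, Real.exp (llr (ρb j) νa (x ∘ e j)) =
        ((ρb j).rnDeriv νa (x ∘ e j)).toReal :=
      ae_all_iff.2 fun j => ae_of_ae_map (hmeas j).aemeasurable (exp_llr_of_ac _ _ (hac_b j))
    filter_upwards [hexp_b] with x hx
    rw [Real.exp_sum, ENNReal.ofReal_prod_of_nonneg fun j _ => (Real.exp_pos _).le]
    exact Finset.prod_le_prod' fun j _ => (hx j).symm ▸ ENNReal.ofReal_toReal_le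
  have hdensity : ∫⁻ x, ∏ j, (ρb j).rnDeriv νa (x ∘ e j) ∂ν = 1 := by
    rw [lintegral_prod_blocks_pi μ he fun j => Measure.measurable_rnDeriv _ _]
    exact Finset.prod_eq_one fun j _ => by rw [Measure.lintegral_rnDeriv (hac_b j), measure_univ]
  have hgibbs := integral_le_integral_llr hac hllr
    (Finset.measurable_prod _ fun j _ => (Measure.measurable_rnDeriv _ _).comp (hmeas j))
    hdensity.le (integrable_finsetSum _ fun j _ => hllr_comp j) hexp
  rw [integral_finsetSum _ fun j _ => hllr_comp j] at hgibbs
  simp_rw [← integral_map (hmeas _).aemeasurable (hllr_b _).1] at hgibbs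
  calc ∑ j, klDiv (ρb j) νa = ∑ j, ENNReal.ofReal (∫ y, llr (ρb j) νa y ∂ρb j) :=
        Finset.sum_congr rfl fun j _ => klDiv_eq_ofReal_integral_llr (hac_b j) (hllr_b j)
    _ = ENNReal.ofReal (∑ j, ∫ y, llr (ρb j) νa y ∂ρb j) :=
        (ENNReal.ofReal_sum_of_nonneg fun j _ => integral_llr_nonneg (hac_b j) (hllr_b j)).symm
    _ ≤ ENNReal.ofReal (∫ x, llr ρ ν x ∂ρ) := ENNReal.ofReal_le_ofReal hgibbs
    _ = klDiv ρ ν := (klDiv_eq_ofReal_integral_llr hac hllr).symm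

end InformationTheory

lemma relEntropy_eq_klDiv {Ω : Type*} [MeasurableSpace Ω] (ρ ν : Measure Ω)
    [IsProbabilityMeasure ρ] [IsProbabilityMeasure ν] :
    relEntropy ρ ν = InformationTheory.klDiv ρ ν := by
  rw [relEntropy]
  split_ifs with h
  · exact (InformationTheory.klDiv_eq_ofReal_integral_llr h.1 h.2).symm
  · exact (InformationTheory.klDiv_eq_top_iff.2 fun hac hllr => h ⟨hac, hllr⟩).symm

lemma Nat.le_two_mul_mul_div {k N : ℕ} (hk : 0 < k) (hkN : k ≤ N) : N ≤ 2 * k * (N / k) := by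
  have hlt := Nat.lt_div_mul_add (a := N) hk
  have hone : 1 ≤ N / k := (Nat.one_le_div_iff hk).2 hkN
  nlinarith

lemma ENNReal.le_div_mul_of_nat_mul_le {a b c : ℝ≥0∞} {m N : ℕ} (hN : N ≠ 0)
    (hNm : (N : ℝ≥0∞) ≤ c * m) (h : m * a ≤ b) : a ≤ c / N * b := by
  rw [← ENNReal.mul_div_right_comm, ENNReal.le_div_iff_mul_le (Or.inl (by exact_mod_cast hN))
    (Or.inl (ENNReal.natCast_ne_top N))]
  calc a * N ≤ a * (c * m) := by gcongr
    _ = c * (m * a) := by ring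
    _ ≤ c * b := by gcongr

/-- Dimensional bound on entropy: if `μ^N` is a symmetric probability measure on `E^N` and
`μ` a probability measure on `E`, then for `1 ≤ k ≤ N` the `k`-fold marginal satisfies
`H(μ^{N,k} | μ^{⊗k}) ≤ (2k/N) H(μ^N | μ^{⊗N})`. -/
theorem entropy_dimension_bound {E : Type*} [MeasurableSpace E]
    (N k : ℕ) (hk : 1 ≤ k) (hkN : k ≤ N)
    (μN : Measure (Fin N → E)) [IsProbabilityMeasure μN]
    (μ : Measure E) [IsProbabilityMeasure μ]
    (hsym : ∀ σ : Equiv.Perm (Fin N), Measure.map (fun x => x ∘ σ) μN = μN) :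
    relEntropy
        (Measure.map (fun (x : Fin N → E) (i : Fin k) => x (Fin.castLE hkN i)) μN)
        (Measure.pi fun _ : Fin k => μ)
      ≤ (2 * k : ℝ≥0∞) / N * relEntropy μN (Measure.pi fun _ : Fin N => μ) := by
  have hmk : N / k * k ≤ N := Nat.div_mul_le_self N k
  let e : Fin (N / k) → Fin k → Fin N := fun j i => Fin.castLE hmk (finProdFinEquiv (j, i))
  have he : Injective (uncurry e) := (Fin.castLE_injective hmk).comp finProdFinEquiv.injective
  have hblock : ∀ j, μN.map (fun x => x ∘ e j) = μN.map (fun x i => x (Fin.castLE hkN i)) :=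
    fun j => Measure.map_comp_eq_of_perm_invariant hsym (he.comp (Prod.mk_right_injective j))
      (Fin.castLE_injective hkN)
  have hsuper := InformationTheory.sum_klDiv_map_blocks_le μ μN he
  simp only [hblock, Finset.sum_const, Finset.card_univ, Fintype.card_fin, nsmul_eq_mul] at hsuper
  have : IsProbabilityMeasure (μN.map fun x (i : Fin k) => x (Fin.castLE hkN i)) :=
    Measure.isProbabilityMeasure_map
      (measurable_pi_lambda _ fun _ => measurable_pi_apply _).aemeasurable
  rw [relEntropy_eq_klDiv, relEntropy_eq_klDiv]
  refine ENNReal.le_div_mul_of_nat_mul_le (by omega) ?_ hsuper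
  exact_mod_cast Nat.le_two_mul_mul_div hk hkN
end
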